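/- If g : ℝ → ℂ is a Schwartz function, then for any p ≥ 0, the integral over [-n/2, n/2] of |ξ|^p |F_n(g)(ξ) - F(g)(ξ)|² dξ tends to 0 as n → ∞, where F(g) is the Fourier transform of g and F_n(g) is its discrete Fourier transform. -/

import Mathlib

/-!
Poisson summation turns the discrete transform into a periodisation of the continuous one:
`F_n(g)(ξ) = ∑ₖ 𝓕 g (n k - ξ)`, where Mathlib's `𝓕` carries the opposite sign, so that
`F(g)(ξ) = 𝓕 g (-ξ)` is the term `k = 0`. For `|ξ| ≤ n / 2` the remaining arguments satisfy
`|n k - ξ| ≥ n |k| / 2`, so the rapid decay of `𝓕 g` bounds the error by `D / n ^ m` for every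
`m`. Taking `m` large, this beats both the weight `|ξ| ^ p ≤ n ^ m` and the length `n` of the
interval of integration.
-/

open MeasureTheory Real Filter

/-- The discrete Fourier transform of an integrable function. -/
noncomputable def discreteFourier (g : ℝ → ℂ) (n : ℕ) (ξ : ℝ) : ℂ :=
  (1 / (n : ℂ)) * ∑' x : ℤ, g ((x : ℝ) / n) *
    Complex.exp (2 * (π : ℂ) * Complex.I * (x : ℂ) * (ξ : ℂ) / (n : ℂ))

/-- The (continuous) Fourier transform `F(g)(ξ) = ∫ g(u) e^{2πiξu} du`. -/
noncomputable def contFourier (g : ℝ → ℂ) (ξ : ℝ) : ℂ :=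
  ∫ u : ℝ, g u * Complex.exp (2 * (π : ℂ) * Complex.I * (ξ : ℂ) * (u : ℂ))

open scoped FourierTransform SchwartzMap

theorem Real.fourier_comp_mul_left {E : Type*} [NormedAddCommGroup E] [NormedSpace ℂ E]
    (f : ℝ → E) {a : ℝ} (ha : a ≠ 0) (w : ℝ) :
    𝓕 (fun v => f (a * v)) w = |a|⁻¹ • 𝓕 f (w / a) := by
  simp only [Real.fourier_real_eq_integral_exp_smul]
  rw [← abs_inv, ← Measure.integral_comp_mul_left]
  congr 1 with v
  congr 3
  field_simp

theorem SchwartzMap.fourier_fourier_apply {V E : Type*} [NormedAddCommGroup V]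
    [InnerProductSpace ℝ V] [FiniteDimensional ℝ V] [MeasurableSpace V] [BorelSpace V]
    [NormedAddCommGroup E] [NormedSpace ℂ E] [CompleteSpace E] (f : 𝓢(V, E)) (x : V) :
    𝓕 (𝓕 f) x = f (-x) := by
  have h := congrArg (· (-x)) (FourierTransform.fourierInv_fourier_eq (F := 𝓢(V, E)) f)
  rw [SchwartzMap.fourierInv_coe, Real.fourierInv_eq_fourier_neg, neg_neg] at h
  rwa [SchwartzMap.fourier_coe]

theorem discreteFourier_eq_tsum_fourier (g : 𝓢(ℝ, ℂ)) {n : ℕ} (hn : n ≠ 0) (ξ : ℝ) :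
    discreteFourier (fun u => g u) n ξ = ∑' k : ℤ, 𝓕 g (n * k - ξ) := by
  have hn' : (n : ℝ) ≠ 0 := Nat.cast_ne_zero.2 hn
  set H : 𝓢(ℝ, ℂ) := SchwartzMap.compCLMOfContinuousLinearEquiv ℂ
    (ContinuousLinearEquiv.unitsEquivAut ℝ (Units.mk0 (n : ℝ) hn')) (𝓕 g)
  have hH : ∀ v, H v = 𝓕 g (n * v) := fun v => by simp [H, mul_comm]
  have hFH : ∀ k : ℤ, 𝓕 H k = (n : ℂ)⁻¹ * g (-(k / n)) := fun k => by
    rw [SchwartzMap.fourier_coe, funext hH, Real.fourier_comp_mul_left _ hn',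
      ← SchwartzMap.fourier_coe, SchwartzMap.fourier_fourier_apply, Nat.abs_cast]
    simp [Complex.real_smul]
  -- Poisson summation for `H` at `-ξ / n`, then the reindexing `k ↦ -k`.
  have poisson := SchwartzMap.tsum_eq_tsum_fourier H (-ξ / n)
  simp only [hH, hFH, fourier_coe_apply] at poisson
  rw [discreteFourier, ← tsum_mul_left]
  calc _ = ∑' k : ℤ, (n : ℂ)⁻¹ * g (-(((-k : ℤ) : ℝ) / n)) *
        Complex.exp (2 * π * Complex.I * ((-k : ℤ) : ℂ) * ((-ξ / n : ℝ) : ℂ) / ((1 : ℝ) : ℂ)) :=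
        tsum_congr fun k => by push_cast; ring_nf
    _ = _ := (tsum_comp_neg _).trans poisson.symm
    _ = _ := tsum_congr fun k => by congr 1; field_simp; ring

theorem contFourier_eq_fourier_neg (f : ℝ → ℂ) (ξ : ℝ) : contFourier f ξ = 𝓕 f (-ξ) := by
  rw [contFourier, Real.fourier_real_eq_integral_exp_smul]
  congr 1 with u
  rw [smul_eq_mul, mul_comm]
  push_cast
  ring_nf

theorem SchwartzMap.norm_apply_mul_int_sub_le {E : Type*} [NormedAddCommGroup E]
    [NormedSpace ℝ E] (G : 𝓢(ℝ, E)) (m : ℕ) {a ξ : ℝ} (ha : 0 < a) (hξ : |ξ| ≤ a / 2)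
    {k : ℤ} (hk : k ≠ 0) :
    ‖G (a * k - ξ)‖ ≤ 2 ^ m * SchwartzMap.seminorm ℝ m 0 G / a ^ m * (1 / |(k : ℝ)| ^ m) := by
  have hk1 : (1 : ℝ) ≤ |(k : ℝ)| := by exact_mod_cast Int.one_le_abs hk
  have hr : a * |(k : ℝ)| / 2 ≤ |a * k - ξ| := by
    have := abs_sub_abs_le_abs_sub (a * k) ξ
    rw [abs_mul, abs_of_pos ha] at this
    nlinarith
  have hr0 : 0 < a * |(k : ℝ)| / 2 := by positivity
  have hdecay := G.norm_pow_mul_le_seminorm ℝ m (a * k - ξ)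
  rw [Real.norm_eq_abs] at hdecay
  calc ‖G (a * k - ξ)‖ ≤ SchwartzMap.seminorm ℝ m 0 G / |a * k - ξ| ^ m := by
        rw [le_div_iff₀ (pow_pos (hr0.trans_le hr) m)]; linarith
    _ ≤ SchwartzMap.seminorm ℝ m 0 G / (a * |(k : ℝ)| / 2) ^ m := by gcongr
    _ = _ := by rw [div_pow, mul_pow]; field_simp

theorem exists_norm_discreteFourier_sub_contFourier_le (g : 𝓢(ℝ, ℂ)) {m : ℕ} (hm : 1 < m) :
    ∃ D, ∀ n : ℕ, n ≠ 0 → ∀ ξ : ℝ, |ξ| ≤ n / 2 →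
      ‖discreteFourier (fun u => g u) n ξ - contFourier (fun u => g u) ξ‖ ≤ D / n ^ m := by
  set C := SchwartzMap.seminorm ℝ m 0 (𝓕 g)
  have hS : Summable fun k : ℤ => 1 / |(k : ℝ)| ^ m := by
    simpa [abs_pow] using (Real.summable_one_div_int_pow.2 hm).abs
  refine ⟨2 ^ m * C * ∑' k : ℤ, 1 / |(k : ℝ)| ^ m, fun n hn ξ hξ => ?_⟩
  have hn0 : (0 : ℝ) < n := by positivity
  have hbound : ∀ k : ℤ, ‖if k = 0 then 0 else 𝓕 g (n * k - ξ)‖ ≤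
      2 ^ m * C / n ^ m * (1 / |(k : ℝ)| ^ m) := by
    intro k
    split_ifs with hk
    · rw [norm_zero]; positivity
    · exact (𝓕 g).norm_apply_mul_int_sub_le m hn0 hξ hk
  have hsum := (hS.mul_left (2 ^ m * C / n ^ m)).of_norm_bounded hbound
  rw [discreteFourier_eq_tsum_fourier g hn, contFourier_eq_fourier_neg, ← SchwartzMap.fourier_coe g,
    Summable.tsum_eq_add_tsum_ite' 0 (hsum.congr fun k => by rw [Function.update_apply])]
  simp only [Int.cast_zero, mul_zero, zero_sub, add_sub_cancel_left]
  calc _ ≤ ∑' k : ℤ, 2 ^ m * C / n ^ m * (1 / |(k : ℝ)| ^ m) :=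
        tsum_of_norm_bounded (hS.mul_left _).hasSum hbound
    _ = (2 ^ m * C * ∑' k : ℤ, 1 / |(k : ℝ)| ^ m) / n ^ m := by rw [tsum_mul_left]; ring

theorem abs_rpow_mul_sq_le {p a ξ e D : ℝ} {m : ℕ} (hp : 0 ≤ p) (hpm : p ≤ m) (hm : 2 ≤ m)
    (ha : 1 ≤ a) (hξ : |ξ| ≤ a) (he0 : 0 ≤ e) (he : e ≤ D / a ^ m) :
    |ξ| ^ p * e ^ 2 ≤ D ^ 2 / a ^ 2 := by
  have hweight : |ξ| ^ p ≤ a ^ m := by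
    rw [← Real.rpow_natCast]
    exact (Real.rpow_le_rpow (abs_nonneg ξ) hξ hp).trans (Real.rpow_le_rpow_of_exponent_le ha hpm)
  calc |ξ| ^ p * e ^ 2 ≤ a ^ m * (D / a ^ m) ^ 2 :=
        mul_le_mul hweight (pow_le_pow_left₀ he0 he 2) (by positivity) (by positivity)
    _ = D ^ 2 / a ^ m := by field_simp
    _ ≤ D ^ 2 / a ^ 2 := by gcongr

theorem stmt_2 (g : SchwartzMap ℝ ℂ) (p : ℝ) (hp : 0 ≤ p) :
    Tendsto (fun n : ℕ =>
        ∫ ξ in (-(n : ℝ)/2)..((n : ℝ)/2),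
          |ξ| ^ p * ‖discreteFourier (fun u => g u) n ξ - contFourier (fun u => g u) ξ‖ ^ 2)
      atTop (nhds 0) := by
  obtain ⟨D, hD⟩ := exists_norm_discreteFourier_sub_contFourier_le g (m := ⌈p⌉₊ + 2) (by omega)
  have hpm : p ≤ (⌈p⌉₊ + 2 : ℕ) := by push_cast; linarith [Nat.le_ceil p]
  refine squeeze_zero_norm' ?_ (tendsto_const_div_atTop_nhds_zero_nat (D ^ 2))
  filter_upwards [eventually_ne_atTop 0] with n hn
  have hn1 : (1 : ℝ) ≤ n := Nat.one_le_cast.2 (Nat.pos_of_ne_zero hn)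
  have hintegrand : ∀ ξ ∈ Set.uIoc (-(n : ℝ) / 2) (n / 2),
      ‖|ξ| ^ p * ‖discreteFourier (fun u => g u) n ξ - contFourier (fun u => g u) ξ‖ ^ 2‖ ≤
        D ^ 2 / n ^ 2 := by
    intro ξ hξ
    rw [Set.uIoc_of_le (by linarith)] at hξ
    have hξn : |ξ| ≤ n / 2 := abs_le.2 ⟨by linarith [hξ.1], hξ.2⟩
    rw [Real.norm_of_nonneg (by positivity)]
    exact abs_rpow_mul_sq_le hp hpm (by omega) hn1 (by linarith) (norm_nonneg _) (hD n hn ξ hξn)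
  calc _ ≤ D ^ 2 / n ^ 2 * |(n : ℝ) / 2 - -(n : ℝ) / 2| :=
        intervalIntegral.norm_integral_le_of_norm_le_const hintegrand
    _ = D ^ 2 / n := by rw [abs_of_nonneg (by linarith)]; field_simp; ring
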